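/- arXiv:1302.1164 — 6 statements merged into one kernel-verified Lean document; each statement's English description precedes it below -/
import Mathlib

section
/- Let x1,x2,x3 : ℝ → ℝ be smooth functions satisfying the SR-class system ẋ1 = a0 + a1·x1 + a2·x2 + a3·x3, ẋ2 = b0 + b1·x1 + b2·x2, ẋ3 = c0 + c1·x1 + c2·x2 + c3·x3 + c4·x1·x2 + c5·x1·x3 + c6·x2·x3 (so b3 = 0), with b1 ≠ 0, and set y1 := x2. Then there exist real constants A0, ..., A8 (explicit polynomial/rational expressions in the system coefficients, independent of t) with A8 = c5/b1 and A7 = −(c5/b1)(a1 + b2) such that for all t, y1''' = A0 + A1·y1 + A2·y1' + A3·y1'' + A4·y1² + A5·y1·y1' + A6·y1·y1'' + A7·(y1')² + A8·y1'·y1''; in particular the coefficient of (y1'')² in the standard-system reconstruction is zero (A9 = 0). -/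
theorem stmt_2 (a0 a1 a2 a3 b0 b1 b2 c0 c1 c2 c3 c4 c5 c6 : ℝ)
    (hb1 : b1 ≠ 0) (x1 x2 x3 : ℝ → ℝ)
    (hx1 : ContDiff ℝ (⊤ : ℕ∞) x1) (hx2 : ContDiff ℝ (⊤ : ℕ∞) x2) (hx3 : ContDiff ℝ (⊤ : ℕ∞) x3)
    (h1 : ∀ t, deriv x1 t = a0 + a1 * x1 t + a2 * x2 t + a3 * x3 t)
    (h2 : ∀ t, deriv x2 t = b0 + b1 * x1 t + b2 * x2 t)
    (h3 : ∀ t, deriv x3 t = c0 + c1 * x1 t + c2 * x2 t + c3 * x3 t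
      + c4 * x1 t * x2 t + c5 * x1 t * x3 t + c6 * x2 t * x3 t) :
    ∃ A0 A1 A2 A3 A4 A5 A6 A7 A8 : ℝ,
      A8 = c5 / b1 ∧ A7 = -(c5 / b1) * (a1 + b2) ∧
      ∀ t, deriv (deriv (deriv x2)) t =
        A0 + A1 * x2 t + A2 * deriv x2 t + A3 * deriv (deriv x2) t
        + A4 * (x2 t) ^ 2 + A5 * x2 t * deriv x2 t + A6 * x2 t * deriv (deriv x2) t
        + A7 * (deriv x2 t) ^ 2 + A8 * deriv x2 t * deriv (deriv x2) t := by
  have d1 : Differentiable ℝ x1 := hx1.differentiable (by simp)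
  have d2 : Differentiable ℝ x2 := hx2.differentiable (by simp)
  have d3 : Differentiable ℝ x3 := hx3.differentiable (by simp)
  have H1 : ∀ t, HasDerivAt x1 (a0 + a1 * x1 t + a2 * x2 t + a3 * x3 t) t :=
    fun t => h1 t ▸ (d1 t).hasDerivAt
  have H2 : ∀ t, HasDerivAt x2 (b0 + b1 * x1 t + b2 * x2 t) t :=
    fun t => h2 t ▸ (d2 t).hasDerivAt
  have H3 : ∀ t, HasDerivAt x3 (c0 + c1 * x1 t + c2 * x2 t + c3 * x3 t
      + c4 * x1 t * x2 t + c5 * x1 t * x3 t + c6 * x2 t * x3 t) t :=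
    fun t => h3 t ▸ (d3 t).hasDerivAt
  have E2 : ∀ t, deriv (deriv x2) t =
      b1 * (a0 + a1 * x1 t + a2 * x2 t + a3 * x3 t) + b2 * (b0 + b1 * x1 t + b2 * x2 t) := by
    intro t
    have h : HasDerivAt (deriv x2)
        (b1 * (a0 + a1 * x1 t + a2 * x2 t + a3 * x3 t) + b2 * (b0 + b1 * x1 t + b2 * x2 t)) t := by
      rw [funext h2]
      exact (((H1 t).const_mul b1).const_add b0).add ((H2 t).const_mul b2)
    exact h.deriv
  have E3 : ∀ t, deriv (deriv (deriv x2)) t =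
      b1 * (a1 * (a0 + a1 * x1 t + a2 * x2 t + a3 * x3 t)
        + a2 * (b0 + b1 * x1 t + b2 * x2 t)
        + a3 * (c0 + c1 * x1 t + c2 * x2 t + c3 * x3 t
          + c4 * x1 t * x2 t + c5 * x1 t * x3 t + c6 * x2 t * x3 t))
      + b2 * (b1 * (a0 + a1 * x1 t + a2 * x2 t + a3 * x3 t)
        + b2 * (b0 + b1 * x1 t + b2 * x2 t)) := by
    intro t
    have inner1 : HasDerivAt (fun s => a0 + a1 * x1 s + a2 * x2 s + a3 * x3 s)
        (a1 * (a0 + a1 * x1 t + a2 * x2 t + a3 * x3 t)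
          + a2 * (b0 + b1 * x1 t + b2 * x2 t)
          + a3 * (c0 + c1 * x1 t + c2 * x2 t + c3 * x3 t
            + c4 * x1 t * x2 t + c5 * x1 t * x3 t + c6 * x2 t * x3 t)) t := by
      have := ((((H1 t).const_mul a1).const_add a0).add ((H2 t).const_mul a2)).add
        ((H3 t).const_mul a3)
      exact this
    have inner2 : HasDerivAt (fun s => b0 + b1 * x1 s + b2 * x2 s)
        (b1 * (a0 + a1 * x1 t + a2 * x2 t + a3 * x3 t) + b2 * (b0 + b1 * x1 t + b2 * x2 t)) t := by
      have := (((H1 t).const_mul b1).const_add b0).add ((H2 t).const_mul b2)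
      exact this
    have key : HasDerivAt (fun s => b1 * (a0 + a1 * x1 s + a2 * x2 s + a3 * x3 s)
        + b2 * (b0 + b1 * x1 s + b2 * x2 s))
        (b1 * (a1 * (a0 + a1 * x1 t + a2 * x2 t + a3 * x3 t)
          + a2 * (b0 + b1 * x1 t + b2 * x2 t)
          + a3 * (c0 + c1 * x1 t + c2 * x2 t + c3 * x3 t
            + c4 * x1 t * x2 t + c5 * x1 t * x3 t + c6 * x2 t * x3 t))
        + b2 * (b1 * (a0 + a1 * x1 t + a2 * x2 t + a3 * x3 t)
          + b2 * (b0 + b1 * x1 t + b2 * x2 t))) t :=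
      (inner1.const_mul b1).add (inner2.const_mul b2)
    have e : deriv (deriv x2) = fun s => b1 * (a0 + a1 * x1 s + a2 * x2 s + a3 * x3 s)
        + b2 * (b0 + b1 * x1 s + b2 * x2 s) := funext E2
    rw [e]
    exact key.deriv
  refine ⟨(a3*b1^2*c0 - a3*b0*b1*c1 + a1*b0*b1*c3 - a1*b0^2*c5 - a0*b1^2*c3 + a0*b0*b1*c5) / b1,
    (-(a3*b1*b2*c1) + a3*b1^2*c2 - a3*b0*b1*c4 - a2*b1^2*c3 + a2*b0*b1*c5 + a1*b1*b2*c3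
      - 2*a1*b0*b2*c5 + a1*b0*b1*c6 + a0*b1*b2*c5 - a0*b1^2*c6) / b1,
    (-(b1*b2*c3) + b0*b2*c5 + a3*b1*c1 + a2*b1^2 - a1*b1*c3 - a1*b1*b2 + 2*a1*b0*c5
      - a0*b1*c5) / b1,
    (b1*c3 + b1*b2 - b0*c5 + a1*b1) / b1,
    (-(a3*b1*b2*c4) + a2*b1*b2*c5 - a2*b1^2*c6 - a1*b2^2*c5 + a1*b1*b2*c6) / b1,
    (b2^2*c5 - b1*b2*c6 + a3*b1*c4 - a2*b1*c5 + 2*a1*b2*c5 - a1*b1*c6) / b1,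
    (-(b2*c5) + b1*c6) / b1,
    -(c5 / b1) * (a1 + b2), c5 / b1, rfl, rfl, ?_⟩
  intro t
  rw [E3 t, E2 t, h2 t]
  field_simp
  ring
end

section
/- For the Rössler system ẋ1 = −x2 − x3, ẋ2 = x1 + a·x2, ẋ3 = b − c·x3 + x1·x3 with smooth solutions x1,x2,x3 : ℝ → ℝ, the observable y1 := x2 satisfies for all t the third-order equation y1''' = −b − c·y1 + (a·c − 1)·y1' + (a − c)·y1'' − a·y1² + (a² + 1)·y1·y1' − a·y1·y1'' − a·(y1')² + y1'·y1''. -/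
theorem stmt_3 (a b c : ℝ) (x1 x2 x3 : ℝ → ℝ)
    (hx1 : ContDiff ℝ (⊤ : ℕ∞) x1) (hx2 : ContDiff ℝ (⊤ : ℕ∞) x2) (hx3 : ContDiff ℝ (⊤ : ℕ∞) x3)
    (h1 : ∀ t, deriv x1 t = -x2 t - x3 t)
    (h2 : ∀ t, deriv x2 t = x1 t + a * x2 t)
    (h3 : ∀ t, deriv x3 t = b - c * x3 t + x1 t * x3 t) :
    ∀ t, deriv (deriv (deriv x2)) t =
      -b - c * x2 t + (a * c - 1) * deriv x2 t + (a - c) * deriv (deriv x2) t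
      - a * (x2 t) ^ 2 + (a ^ 2 + 1) * x2 t * deriv x2 t - a * x2 t * deriv (deriv x2) t
      - a * (deriv x2 t) ^ 2 + deriv x2 t * deriv (deriv x2) t := by
  have d1 : Differentiable ℝ x1 := hx1.differentiable (by simp)
  have d2 : Differentiable ℝ x2 := hx2.differentiable (by simp)
  have d3 : Differentiable ℝ x3 := hx3.differentiable (by simp)
  have hd2 : deriv x2 = fun t => x1 t + a * x2 t := funext h2
  have hdd2 : ∀ t, deriv (deriv x2) t = -x2 t - x3 t + a * (x1 t + a * x2 t) := by
    intro t
    rw [hd2, deriv_fun_add (d1 t) ((d2 t).const_mul a), deriv_const_mul a (d2 t),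
      h1 t, h2 t]
  have hdd2' : deriv (deriv x2) = fun t => -x2 t - x3 t + a * (x1 t + a * x2 t) :=
    funext hdd2
  intro t
  rw [hdd2']
  have hdiff : DifferentiableAt ℝ (fun t => -x2 t - x3 t) t :=
    ((d2 t).neg).sub (d3 t)
  have hdiff2 : DifferentiableAt ℝ (fun t => x1 t + a * x2 t) t :=
    (d1 t).add ((d2 t).const_mul a)
  rw [deriv_fun_add hdiff ((hdiff2).const_mul a), deriv_const_mul a hdiff2,
    deriv_fun_sub ((d2 t).fun_neg) (d3 t), deriv.fun_neg,
    deriv_fun_add (d1 t) ((d2 t).const_mul a), deriv_const_mul a (d2 t),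
    h1 t, h2 t, h3 t]
  simp only []
  ring
end

section
/- Let x1,x2,x3 : ℝ → ℝ be smooth solutions of the Rössler-form system ẋ1 = a2·x2 + a3·x3, ẋ2 = b1·x1 + b2·x2, ẋ3 = c0 + c3·x3 + c5·x1·x3 with b1 ≠ 0. Then y1 := x2 satisfies y1''' = A0 + A1·y1 + A2·y1' + A3·y1'' + A4·y1² + A5·y1·y1' + A6·y1·y1'' + A7·(y1')² + A8·y1'·y1'' where A0 = a3·b1·c0, A1 = −a2·b1·c3, A2 = a2·b1 − b2·c3, A3 = b2 + c3, A4 = a2·b2·c5, A5 = c5·(b2²/b1 − a2), A6 = A7 = −b2·c5/b1, A8 = c5/b1. -/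
theorem stmt_4 (a2 a3 b1 b2 c0 c3 c5 : ℝ) (hb1 : b1 ≠ 0) (x1 x2 x3 : ℝ → ℝ)
    (hx1 : ContDiff ℝ (⊤ : ℕ∞) x1) (hx2 : ContDiff ℝ (⊤ : ℕ∞) x2) (hx3 : ContDiff ℝ (⊤ : ℕ∞) x3)
    (h1 : ∀ t, deriv x1 t = a2 * x2 t + a3 * x3 t)
    (h2 : ∀ t, deriv x2 t = b1 * x1 t + b2 * x2 t)
    (h3 : ∀ t, deriv x3 t = c0 + c3 * x3 t + c5 * x1 t * x3 t) :
    ∀ t, deriv (deriv (deriv x2)) t =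
      (a3 * b1 * c0) + (-(a2 * b1 * c3)) * x2 t + (a2 * b1 - b2 * c3) * deriv x2 t
      + (b2 + c3) * deriv (deriv x2) t + (a2 * b2 * c5) * (x2 t) ^ 2
      + (c5 * (b2 ^ 2 / b1 - a2)) * x2 t * deriv x2 t
      + (-(b2 * c5 / b1)) * x2 t * deriv (deriv x2) t
      + (-(b2 * c5 / b1)) * (deriv x2 t) ^ 2
      + (c5 / b1) * deriv x2 t * deriv (deriv x2) t := by
  intro t
  have d1 : Differentiable ℝ x1 := hx1.differentiable (by simp)
  have d2 : Differentiable ℝ x2 := hx2.differentiable (by simp)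
  have d3 : Differentiable ℝ x3 := hx3.differentiable (by simp)
  have f2 : deriv x2 = fun t => b1 * x1 t + b2 * x2 t := funext h2
  -- second derivative
  have g2 : ∀ s, deriv (deriv x2) s = b1 * deriv x1 s + b2 * deriv x2 s := by
    intro s
    rw [f2, deriv_fun_add ((d1 s).const_mul b1) ((d2 s).const_mul b2),
      deriv_const_mul _ (d1 s), deriv_const_mul _ (d2 s)]
    simp [h2 s]
  have g2' : ∀ s, deriv (deriv x2) s =
      b1 * (a2 * x2 s + a3 * x3 s) + b2 * (b1 * x1 s + b2 * x2 s) := by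
    intro s; rw [g2 s, h1 s, h2 s]
  have G2 : deriv (deriv x2) = fun s =>
      b1 * (a2 * x2 s + a3 * x3 s) + b2 * (b1 * x1 s + b2 * x2 s) := funext g2'
  -- third derivative
  have g3 : deriv (deriv (deriv x2)) t =
      b1 * (a2 * deriv x2 t + a3 * deriv x3 t)
        + b2 * (b1 * deriv x1 t + b2 * deriv x2 t) := by
    rw [G2]
    have hA : DifferentiableAt ℝ (fun s => a2 * x2 s + a3 * x3 s) t :=
      ((d2 t).const_mul a2).add ((d3 t).const_mul a3)
    have hB : DifferentiableAt ℝ (fun s => b1 * x1 s + b2 * x2 s) t :=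
      ((d1 t).const_mul b1).add ((d2 t).const_mul b2)
    rw [deriv_fun_add (hA.const_mul b1) (hB.const_mul b2),
      deriv_const_mul _ hA, deriv_const_mul _ hB,
      deriv_fun_add ((d2 t).const_mul a2) ((d3 t).const_mul a3),
      deriv_const_mul _ (d2 t), deriv_const_mul _ (d3 t),
      deriv_fun_add ((d1 t).const_mul b1) ((d2 t).const_mul b2),
      deriv_const_mul _ (d1 t), deriv_const_mul _ (d2 t)]
  rw [g3, h1 t, h2 t, h3 t, g2' t]
  field_simp
  ring
end

section
/- Let x1,x2,x3 : ℝ → ℝ be smooth solutions of ẋ1 = a2·x2 + a3·x3, ẋ2 = b0 + b1·x1 + b2·x2, ẋ3 = c0 + c5·x1·x3 with b1 ≠ 0. Then y1 := x2 satisfies y1''' = A0 + A1·y1 + A2·y1' + A3·y1'' + A4·y1² + A5·y1·y1' + A6·y1·y1'' + A7·(y1')² + A8·y1'·y1'' with A0 = a3·b1·c0, A1 = a2·b0·c5, A2 = a2·b1 + b0·b2·c5/b1, A3 = b2 − b0·c5/b1, A4 = a2·b2·c5, A5 = c5·(b2²/b1 − a2), A6 = A7 = −b2·c5/b1, A8 =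 c5/b1. -/
theorem stmt_5 (a2 a3 b0 b1 b2 c0 c5 : ℝ) (hb1 : b1 ≠ 0) (x1 x2 x3 : ℝ → ℝ)
    (hx1 : ContDiff ℝ (⊤ : ℕ∞) x1) (hx2 : ContDiff ℝ (⊤ : ℕ∞) x2) (hx3 : ContDiff ℝ (⊤ : ℕ∞) x3)
    (h1 : ∀ t, deriv x1 t = a2 * x2 t + a3 * x3 t)
    (h2 : ∀ t, deriv x2 t = b0 + b1 * x1 t + b2 * x2 t)
    (h3 : ∀ t, deriv x3 t = c0 + c5 * x1 t * x3 t) :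
    ∀ t, deriv (deriv (deriv x2)) t =
      (a3 * b1 * c0) + (a2 * b0 * c5) * x2 t
      + (a2 * b1 + b0 * b2 * c5 / b1) * deriv x2 t
      + (b2 - b0 * c5 / b1) * deriv (deriv x2) t
      + (a2 * b2 * c5) * (x2 t) ^ 2
      + (c5 * (b2 ^ 2 / b1 - a2)) * x2 t * deriv x2 t
      + (-(b2 * c5 / b1)) * x2 t * deriv (deriv x2) t
      + (-(b2 * c5 / b1)) * (deriv x2 t) ^ 2
      + (c5 / b1) * deriv x2 t * deriv (deriv x2) t := by
  have d1 : Differentiable ℝ x1 := hx1.differentiable (by simp)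
  have d2 : Differentiable ℝ x2 := hx2.differentiable (by simp)
  have d3 : Differentiable ℝ x3 := hx3.differentiable (by simp)
  have e2 : deriv x2 = fun t => b0 + b1 * x1 t + b2 * x2 t := funext h2
  have hd2 : ∀ t, deriv (deriv x2) t = b1 * deriv x1 t + b2 * deriv x2 t := by
    intro t
    rw [e2]
    have : DifferentiableAt ℝ (fun t => b1 * x1 t) t := (d1 t).const_mul _
    rw [deriv_fun_add (((differentiableAt_const _).fun_add this)) ((d2 t).const_mul _),
      deriv_fun_add (differentiableAt_const _) this, deriv_const, deriv_const_mul _ (d1 t),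
      deriv_const_mul _ (d2 t), h2 t]
    ring
  have hd2' : deriv (deriv x2) = fun t => b1 * (a2 * x2 t + a3 * x3 t)
      + b2 * (b0 + b1 * x1 t + b2 * x2 t) := by
    funext t; rw [hd2 t, h1 t, h2 t]
  have hd3 : ∀ t, deriv (deriv (deriv x2)) t =
      b1 * (a2 * deriv x2 t + a3 * deriv x3 t)
      + b2 * (b1 * deriv x1 t + b2 * deriv x2 t) := by
    intro t
    rw [hd2']
    have hA : DifferentiableAt ℝ (fun t => a2 * x2 t + a3 * x3 t) t :=
      ((d2 t).const_mul _).add ((d3 t).const_mul _)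
    have hB : DifferentiableAt ℝ (fun t => b0 + b1 * x1 t + b2 * x2 t) t :=
      ((differentiableAt_const _).add ((d1 t).const_mul _)).add ((d2 t).const_mul _)
    rw [deriv_fun_add (hA.const_mul _) (hB.const_mul _), deriv_const_mul _ hA,
      deriv_const_mul _ hB,
      deriv_fun_add ((d2 t).const_mul _) ((d3 t).const_mul _),
      deriv_fun_add ((differentiableAt_const _).fun_add ((d1 t).const_mul _)) ((d2 t).const_mul _),
      deriv_fun_add (differentiableAt_const _) ((d1 t).const_mul _), deriv_const,
      deriv_const_mul _ (d1 t), deriv_const_mul _ (d2 t), deriv_const_mul _ (d3 t),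
      deriv_const_mul _ (d2 t)]
    ring
  intro t
  rw [hd3 t, hd2 t, h1 t, h2 t, h3 t]
  field_simp
  ring
end

section
/- Let x1,x2,x3 : ℝ → ℝ be smooth solutions of the system ẋ1 = a2·x2 + a3·x3, ẋ2 = b1·x1, ẋ3 = c1·x1 + c3·x3 + c4·x1·x2. Then y1 := x2 satisfies for all t: y1''' = A1·y1 + A2·y1' + A3·y1'' + A5·y1·y1', where A1 = −a2·b1·c3, A2 = a2·b1 + a3·c1, A3 = c3, A5 = a3·c4. -/
theorem stmt_8 (a2 a3 b1 c1 c3 c4 : ℝ) (x1 x2 x3 : ℝ → ℝ)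
    (hx1 : ContDiff ℝ (⊤ : ℕ∞) x1) (hx2 : ContDiff ℝ (⊤ : ℕ∞) x2) (hx3 : ContDiff ℝ (⊤ : ℕ∞) x3)
    (h1 : ∀ t, deriv x1 t = a2 * x2 t + a3 * x3 t)
    (h2 : ∀ t, deriv x2 t = b1 * x1 t)
    (h3 : ∀ t, deriv x3 t = c1 * x1 t + c3 * x3 t + c4 * x1 t * x2 t) :
    ∀ t, deriv (deriv (deriv x2)) t =
      (-(a2 * b1 * c3)) * x2 t + (a2 * b1 + a3 * c1) * deriv x2 t
      + c3 * deriv (deriv x2) t + (a3 * c4) * x2 t * deriv x2 t := by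
  have d1 : Differentiable ℝ x1 := hx1.differentiable (by simp)
  have d2 : Differentiable ℝ x2 := hx2.differentiable (by simp)
  have d3 : Differentiable ℝ x3 := hx3.differentiable (by simp)
  have e2 : deriv x2 = fun t => b1 * x1 t := funext h2
  have e22 : deriv (deriv x2) = fun t => b1 * (a2 * x2 t + a3 * x3 t) := by
    funext t
    rw [e2, deriv_const_mul _ (d1 t), h1]
  intro t
  rw [e22]
  rw [deriv_const_mul _ (show DifferentiableAt ℝ (fun y => a2 * x2 y + a3 * x3 y) t from
      ((d2.const_mul a2).add (d3.const_mul a3)) t),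
    deriv_fun_add ((d2.const_mul a2) t) ((d3.const_mul a3) t),
    deriv_const_mul _ (d2 t), deriv_const_mul _ (d3 t), h2, h3]
  simp only []
  ring
end

section
/- Let x1,x2,x3 : ℝ → ℝ be smooth solutions of the maximal candidate system ẋ1 = a1·x1 + a2·x2 + a3·x3, ẋ2 = b0 + b1·x1, ẋ3 = c1·x1 + c2·x2 + c3·x3 + c4·x1·x2 with b1 ≠ 0. Then y1 := x2 satisfies y1''' = A0 + A1·y1 + A2·y1' + A3·y1'' + A5·y1·y1' with A0 = a1·b0·c3 − a3·b0·c1, A1 = a3·b1·c2 − a2·b1·c3 − a3·b0·c4, A2 = a2·b1 + a3·c1 − a1·c3, A3 = a1 + c3, A5 = a3·c4; in particular no terms y1², y1·y1'', (y1')², or y1'·y1'' appear (A4 = A6 = A7 = A8 = 0). -/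
theorem stmt_10 (a1 a2 a3 b0 b1 c1 c2 c3 c4 : ℝ) (hb1 : b1 ≠ 0)
    (x1 x2 x3 : ℝ → ℝ)
    (hx1 : ContDiff ℝ (⊤ : ℕ∞) x1) (hx2 : ContDiff ℝ (⊤ : ℕ∞) x2) (hx3 : ContDiff ℝ (⊤ : ℕ∞) x3)
    (h1 : ∀ t, deriv x1 t = a1 * x1 t + a2 * x2 t + a3 * x3 t)
    (h2 : ∀ t, deriv x2 t = b0 + b1 * x1 t)
    (h3 : ∀ t, deriv x3 t = c1 * x1 t + c2 * x2 t + c3 * x3 t + c4 * x1 t * x2 t) :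
    ∀ t, deriv (deriv (deriv x2)) t =
      (a1 * b0 * c3 - a3 * b0 * c1)
      + (a3 * b1 * c2 - a2 * b1 * c3 - a3 * b0 * c4) * x2 t
      + (a2 * b1 + a3 * c1 - a1 * c3) * deriv x2 t
      + (a1 + c3) * deriv (deriv x2) t
      + (a3 * c4) * x2 t * deriv x2 t := by
  have d1 : Differentiable ℝ x1 := hx1.differentiable (by simp)
  have d2 : Differentiable ℝ x2 := hx2.differentiable (by simp)
  have d3 : Differentiable ℝ x3 := hx3.differentiable (by simp)
  have e2 : deriv x2 = fun t => b0 + b1 * x1 t := funext h2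
  have e1 : deriv x1 = fun t => a1 * x1 t + a2 * x2 t + a3 * x3 t := funext h1
  have e3 : deriv x3 = fun t => c1 * x1 t + c2 * x2 t + c3 * x3 t + c4 * x1 t * x2 t :=
    funext h3
  have dd2 : deriv (deriv x2) = fun t => b1 * deriv x1 t := by
    rw [e2]; funext t
    simp [deriv_const_add, deriv_const_mul, d1 t]
  have dd1 : ∀ t, deriv (deriv x1) t =
      a1 * deriv x1 t + a2 * deriv x2 t + a3 * deriv x3 t := by
    intro t
    conv_lhs => rw [e1]
    rw [deriv_fun_add (by fun_prop) (by fun_prop), deriv_fun_add (by fun_prop) (by fun_prop),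
      deriv_const_mul _ (d1 t), deriv_const_mul _ (d2 t), deriv_const_mul _ (d3 t)]
  intro t
  have key : deriv (deriv (deriv x2)) t = b1 * deriv (deriv x1) t := by
    rw [dd2]
    have hdd1 : Differentiable ℝ (deriv x1) := by
      rw [e1]; fun_prop
    rw [deriv_const_mul _ (hdd1 t)]
  rw [key]
  simp only [dd1, dd2, h1, h2, h3]
  ring
end
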